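/- If P and Q are quandles presented by ⟨X | R⟩ and ⟨Y | S⟩, then the enveloping group of their free product Q * P = ⟨X ∪ Y | R ∪ S⟩ is the free product of groups G_Q * G_P; moreover, if the natural maps Q → G_Q and P → G_P are injective, then the natural map Q * P → G_{Q*P} is injective. -/

import Mathlib

open Quandles

/-- Quandle words on a set `X` of generators: generators, `a * b`, and `a *⁻¹ b`. -/
inductive QW (X : Type u) : Type u
  | of (x : X) : QW X
  | op (a b : QW X) : QW X
  | opInv (a b : QW X) : QW X

namespace QW

/-- Renaming of generators in quandle words. -/
def map {X : Type u} {Z : Type v} (f : X → Z) : QW X → QW Z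
  | of x => of (f x)
  | op a b => op (map f a) (map f b)
  | opInv a b => opInv (map f a) (map f b)

/-- The equivalence relation on quandle words generated by the quandle axioms and a set `R`
of defining relations. -/
inductive Rel {X : Type u} (R : QW X → QW X → Prop) : QW X → QW X → Prop
  | rel {a b} : R a b → Rel R a b
  | refl (a) : Rel R a a
  | symm {a b} : Rel R a b → Rel R b a
  | trans {a b c} : Rel R a b → Rel R b c → Rel R a c
  | congr_op {a b c d} : Rel R a b → Rel R c d → Rel R (op a c) (op b d)
  | congr_opInv {a b c d} : Rel R a b → Rel R c d → Rel R (opInv a c) (opInv b d)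
  | idem (a) : Rel R (op a a) a
  | idemInv (a) : Rel R (opInv a a) a
  | cancel (a b) : Rel R (opInv (op a b) b) a
  | cancel' (a b) : Rel R (op (opInv a b) b) a
  | distrib (a b c) : Rel R (op (op a b) c) (op (op a c) (op b c))

def setoid {X : Type u} (R : QW X → QW X → Prop) : Setoid (QW X) :=
  ⟨Rel R, ⟨Rel.refl, Rel.symm, Rel.trans⟩⟩

end QW

/-- The quandle presented by generators `X` and relations `R`. -/
def PresentedQuandle {X : Type u} (R : QW X → QW X → Prop) : Type u :=
  Quotient (QW.setoid R)

namespace PresentedQuandle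

variable {X : Type u} {R : QW X → QW X → Prop}

theorem opInv_distrib (z y x : QW X) :
    QW.Rel R (QW.opInv (QW.opInv z y) x)
      (QW.opInv (QW.opInv z x) (QW.opInv y x)) := by
  set u := QW.opInv (QW.opInv z x) (QW.opInv y x) with hu
  have h1 : QW.Rel R (QW.op (QW.op u (QW.opInv y x)) x)
      (QW.op (QW.op u x) (QW.op (QW.opInv y x) x)) := QW.Rel.distrib _ _ _
  have h2 : QW.Rel R (QW.op (QW.op u (QW.opInv y x)) x) (QW.op (QW.opInv z x) x) :=
    QW.Rel.congr_op (QW.Rel.cancel' _ _) (QW.Rel.refl _)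
  have h3 : QW.Rel R (QW.op (QW.opInv z x) x) z := QW.Rel.cancel' _ _
  have h4 : QW.Rel R (QW.op (QW.op u x) (QW.op (QW.opInv y x) x)) (QW.op (QW.op u x) y) :=
    QW.Rel.congr_op (QW.Rel.refl _) (QW.Rel.cancel' _ _)
  have h5 : QW.Rel R z (QW.op (QW.op u x) y) :=
    ((h2.symm.trans h1).trans h4).symm.symm.trans (QW.Rel.refl _) |>.symm.symm |>.trans
      (QW.Rel.refl _) |>.symm.trans h3 |>.symm
  have h6 : QW.Rel R (QW.opInv z y) (QW.op u x) :=
    (QW.Rel.congr_opInv h5 (QW.Rel.refl y)).trans (QW.Rel.cancel _ _)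
  exact (QW.Rel.congr_opInv h6 (QW.Rel.refl x)).trans (QW.Rel.cancel _ _)

instance quandle : Quandle (PresentedQuandle R) where
  act := Quotient.map₂ (fun x y => QW.opInv y x)
    (fun _ _ h _ _ h' => QW.Rel.congr_opInv h' h)
  invAct := Quotient.map₂ (fun x y => QW.op y x)
    (fun _ _ h _ _ h' => QW.Rel.congr_op h' h)
  self_distrib := by
    rintro ⟨x⟩ ⟨y⟩ ⟨z⟩
    exact Quotient.sound (opInv_distrib z y x)
  left_inv := by
    rintro ⟨x⟩ ⟨y⟩
    exact Quotient.sound (QW.Rel.cancel' y x)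
  right_inv := by
    rintro ⟨x⟩ ⟨y⟩
    exact Quotient.sound (QW.Rel.cancel y x)
  fix := by
    rintro ⟨x⟩
    exact Quotient.sound (QW.Rel.idemInv x)

end PresentedQuandle

/-- The relations of the free product `⟨X ∪ Y | R ∪ S⟩` of `⟨X | R⟩` and `⟨Y | S⟩`. -/
def sumRel {X Y : Type u} (R : QW X → QW X → Prop) (S : QW Y → QW Y → Prop) :
    QW (X ⊕ Y) → QW (X ⊕ Y) → Prop := fun a b =>
  (∃ a' b', R a' b' ∧ a = QW.map Sum.inl a' ∧ b = QW.map Sum.inl b') ∨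
  (∃ a' b', S a' b' ∧ a = QW.map Sum.inr a' ∧ b = QW.map Sum.inr b')

/-!
The enveloping group functor is left adjoint to `Quandle.Conj`, so it turns the quandle coproduct
`⟨X ⊕ Y | R ∪ S⟩` of `⟨X | R⟩` and `⟨Y | S⟩` into the group coproduct `G_Q ∗ G_P`.

For injectivity, every element of the free product is `g • x` for a generator `x`, and it is sent
to the conjugate `g x g⁻¹`. If two such conjugates agree, then some `k` conjugates a nontrivial
element of one free factor into a free factor. By the normal form theorem in a free product, both
factors are the same and `k` lies in that factor, so the equality already holds in `G_Q` or `G_P`.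
-/

universe u

namespace Monoid.CoprodI

variable {ι : Type*} {G : ι → Type*} [∀ i, Group (G i)]

theorem NeWord.toList_eq_of_prod_eq_of {i j k : ι} (w : NeWord G i j) {b : G k} (hb : b ≠ 1)
    (h : w.prod = of b) : w.toList = [⟨k, b⟩] := by
  classical
  have : w.toWord = (NeWord.singleton b hb).toWord :=
    Word.equiv.symm.injective (h.trans (NeWord.prod_singleton b hb).symm)
  exact congrArg Word.toList this

theorem eq_and_mem_range_of_conj_of_eq_of {i j : ι} {a : G i} {b : G j} (ha : a ≠ 1)
    {k : CoprodI G} (h : k * of a * k⁻¹ = of b) :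
    i = j ∧ k ∈ (of : G i →* CoprodI G).range := by
  classical
  have hb : b ≠ 1 := by
    rintro rfl
    rw [map_one, mul_inv_eq_one, mul_eq_left, map_eq_one_iff _ (of_injective i)] at h
    exact ha h
  -- `equivPair` splits off the leading letter of `k⁻¹` from `G i`, if any
  set p := Word.equivPair i (Word.equiv k⁻¹)
  have hk : k⁻¹ = of p.head * p.tail.prod := by
    rw [← Word.prod_rcons, ← Word.equivPair_symm, Equiv.symm_apply_apply]
    exact (Word.equiv.symm_apply_apply _).symm
  set a' := p.head⁻¹ * a * p.head
  have ha' : a' ≠ 1 := by simpa [a', mul_assoc, inv_mul_eq_one] using ha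
  have hconj : p.tail.prod⁻¹ * of a' * p.tail.prod = of b := by
    rw [← h, ← inv_inv k, hk]; simp [a', mul_assoc]
  by_cases ht : p.tail = Word.empty
  · rw [ht, Word.prod_empty, inv_one, one_mul, mul_one] at hconj
    have := (NeWord.singleton a' ha').toList_eq_of_prod_eq_of hb (by simpa using hconj)
    refine ⟨congrArg Sigma.fst (List.singleton_inj.mp this), p.head⁻¹, ?_⟩
    rw [map_inv, ← inv_inv k, hk, ht, Word.prod_empty, mul_one]
  · -- then `p.tail⁻¹ * of a' * p.tail` is a reduced word of length at least 3, not a letter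
    exfalso
    obtain ⟨s, e, v, hv⟩ := NeWord.of_word p.tail ht
    have hs : s ≠ i := by
      have := p.fstIdx_ne
      rw [← hv] at this
      simpa [Word.fstIdx, NeWord.toWord, eq_comm] using this
    have := ((v.inv.append hs (NeWord.singleton a' ha')).append hs.symm v).toList_eq_of_prod_eq_of
      hb (by rw [NeWord.append_prod, NeWord.append_prod, NeWord.inv_prod, NeWord.prod_singleton,
        NeWord.prod, hv, hconj])
    have hlen := congrArg List.length this
    simp only [NeWord.toList, List.length_append, List.length_singleton] at hlen
    have := List.length_pos_iff.mpr v.toList_ne_nil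
    omega

end Monoid.CoprodI

namespace Monoid.Coprod

open CoprodI

variable {A B : Type u} [Group A] [Group B]

instance condGroup : ∀ b : Bool, Group (cond b A B)
  | true => ‹Group A›
  | false => ‹Group B›

def toCoprodI : A ∗ B ≃* CoprodI (fun b => cond b A B) :=
  MonoidHom.toMulEquiv (lift (of (M := fun b => cond b A B) (i := true))
      (of (M := fun b => cond b A B) (i := false)))
    (CoprodI.lift fun | true => inl | false => inr)
    (by ext <;> simp)
    (by ext (_ | _) <;> simp)

theorem toCoprodI_inl (a : A) :
    toCoprodI (inl a : A ∗ B) = of (M := fun b => cond b A B) (i := true) a := rfl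

theorem toCoprodI_inr (b : B) :
    toCoprodI (inr b : A ∗ B) = of (M := fun b => cond b A B) (i := false) b := rfl

theorem mem_range_inl_of_conj_eq_inl {a b : A} (ha : a ≠ 1) {k : A ∗ B}
    (h : k * inl a * k⁻¹ = inl b) :
    k ∈ (inl : A →* A ∗ B).range := by
  obtain ⟨-, c, hc⟩ := eq_and_mem_range_of_conj_of_eq_of (G := fun b => cond b A B) (i := true)
    ha (k := toCoprodI k) (by simpa [toCoprodI_inl] using congrArg toCoprodI h)
  exact ⟨c, toCoprodI.injective hc⟩

theorem conj_inl_ne_inr {a : A} (ha : a ≠ 1) (b : B) (k : A ∗ B) :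
    k * inl a * k⁻¹ ≠ inr b := by
  intro h
  obtain ⟨htf, -⟩ := eq_and_mem_range_of_conj_of_eq_of (G := fun b => cond b A B) (i := true)
    (j := false) ha (k := toCoprodI k)
    (by simpa [toCoprodI_inl, toCoprodI_inr] using congrArg toCoprodI h)
  exact Bool.noConfusion htf

theorem mem_range_inr_of_conj_eq_inr {a b : B} (ha : a ≠ 1) {k : A ∗ B}
    (h : k * inr a * k⁻¹ = inr b) :
    k ∈ (inr : B →* A ∗ B).range := by
  obtain ⟨c, hc⟩ := mem_range_inl_of_conj_eq_inl ha (k := swap A B k)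
    (by simpa using congrArg (swap A B) h)
  exact ⟨c, by rw [← swap_swap k, ← hc, swap_inl]⟩

theorem conj_inr_ne_inl {b : B} (hb : b ≠ 1) (a : A) (k : A ∗ B) :
    k * inr b * k⁻¹ ≠ inl a := by
  intro h
  exact conj_inl_ne_inr hb a (swap A B k) (by simpa using congrArg (swap A B) h)

end Monoid.Coprod

namespace Rack

variable {R R₁ R₂ : Type*} [Rack R] [Rack R₁] [Rack R₂]

theorem _root_.ShelfHom.map_invAct (f : R₁ →◃ R₂) (x y : R₁) :
    f (x ◃⁻¹ y) = f x ◃⁻¹ f y := by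
  rw [← left_cancel (f x), ← f.map_act, act_invAct_eq, act_invAct_eq]

theorem _root_.Quandle.conj_invAct_eq_conj {G : Type*} [Group G] (x y : Quandle.Conj G) :
    x ◃⁻¹ y = ((x : G)⁻¹ * (y : G) * (x : G) : G) := by
  rw [← left_cancel x, act_invAct_eq, Quandle.conj_act_eq_conj]
  group

theorem closure_range_toEnvelGroup :
    Subgroup.closure (Set.range (toEnvelGroup R : R → EnvelGroup R)) = ⊤ := by
  refine eq_top_iff.mpr fun g _ => Quotient.inductionOn g fun g => ?_
  induction g with
  | unit => exact one_mem _
  | incl x => exact Subgroup.subset_closure ⟨x, rfl⟩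
  | mul a b iha ihb => exact mul_mem iha ihb
  | inv a iha => exact inv_mem iha

@[elab_as_elim]
theorem EnvelGroup.induction_on {motive : EnvelGroup R → Prop} (g : EnvelGroup R)
    (one : motive 1) (incl : ∀ x, motive (toEnvelGroup R x))
    (incl_inv : ∀ x, motive (toEnvelGroup R x)⁻¹)
    (mul : ∀ g h, motive g → motive h → motive (g * h)) : motive g := by
  have hg : g ∈ Subgroup.closure (Set.range (Rack.toEnvelGroup R : R → EnvelGroup R)) := by
    rw [closure_range_toEnvelGroup]; trivial
  induction hg using Subgroup.closure_induction'' with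
  | mem _ hx => obtain ⟨x, rfl⟩ := hx; exact incl x
  | inv_mem _ hx => obtain ⟨x, rfl⟩ := hx; exact incl_inv x
  | one => exact one
  | mul g h _ _ ihg ihh => exact mul g h ihg ihh

theorem EnvelGroup.hom_ext {G : Type*} [Group G] {F F' : EnvelGroup R →* G}
    (h : ∀ x, F (toEnvelGroup R x) = F' (toEnvelGroup R x)) : F = F' := by
  ext g
  induction g using EnvelGroup.induction_on with
  | one => simp
  | incl x => exact h x
  | incl_inv x => simp [h]
  | mul g g' hg hg' => simp [hg, hg']

theorem toEnvelGroup.map_toEnvelGroup {G : Type*} [Group G] (f : R →◃ Quandle.Conj G) (x : R) :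
    toEnvelGroup.map f (toEnvelGroup R x) = f x := rfl

def EnvelGroup.map (f : R₁ →◃ R₂) : EnvelGroup R₁ →* EnvelGroup R₂ :=
  toEnvelGroup.map ((toEnvelGroup R₂).comp f)

theorem EnvelGroup.map_toEnvelGroup (f : R₁ →◃ R₂) (x : R₁) :
    EnvelGroup.map f (toEnvelGroup R₁ x) = toEnvelGroup R₂ (f x) := rfl

theorem envelAction_mul (g h : EnvelGroup R) (x : R) :
    envelAction (g * h) x = envelAction g (envelAction h x) := by
  rw [map_mul, Equiv.Perm.mul_apply]

theorem envelAction_toEnvelGroup_inv (x y : R) :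
    envelAction (toEnvelGroup R x : EnvelGroup R)⁻¹ y = x ◃⁻¹ y := by
  rw [map_inv]; rfl

theorem toEnvelGroup_envelAction (g : EnvelGroup R) (x : R) :
    toEnvelGroup R (envelAction g x) = g * toEnvelGroup R x * g⁻¹ := by
  induction g using EnvelGroup.induction_on generalizing x with
  | one => simp
  | incl y => rw [envelAction_prop, (toEnvelGroup R).map_act]; rfl
  | incl_inv y =>
    rw [envelAction_toEnvelGroup_inv, (toEnvelGroup R).map_invAct, Quandle.conj_invAct_eq_conj,
      inv_inv]
  | mul g h hg hh => rw [envelAction_mul, hg, hh]; group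

theorem map_envelAction (f : R₁ →◃ R₂) (g : EnvelGroup R₁) (x : R₁) :
    f (envelAction g x) = envelAction (EnvelGroup.map f g) (f x) := by
  induction g using EnvelGroup.induction_on generalizing x with
  | one => simp
  | incl y => exact f.map_act
  | incl_inv y =>
    rw [map_inv (EnvelGroup.map f), EnvelGroup.map_toEnvelGroup, envelAction_toEnvelGroup_inv,
      envelAction_toEnvelGroup_inv, f.map_invAct]
  | mul g h hg hh => rw [envelAction_mul, hg, hh, map_mul, envelAction_mul]

theorem toEnvelGroup_ne_one (x : R) : toEnvelGroup R x ≠ 1 := by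
  let degree : R →◃ Quandle.Conj (Multiplicative ℤ) :=
    { toFun := fun _ => Multiplicative.ofAdd 1
      map_act' := by simp }
  intro h
  have := congrArg (toEnvelGroup.map degree) h
  rw [toEnvelGroup.map_toEnvelGroup, map_one] at this
  change Multiplicative.ofAdd (1 : ℤ) = 1 at this
  simp at this

theorem envelAction_map_eq_of_conj_eq (f : R₁ →◃ R₂)
    (hf : Function.Injective (EnvelGroup.map f)) (h₁ : Function.Injective (toEnvelGroup R₁))
    {c : EnvelGroup R₁} {x y : R₁}
    (h : EnvelGroup.map f c * toEnvelGroup R₂ (f x) * (EnvelGroup.map f c)⁻¹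
      = toEnvelGroup R₂ (f y)) :
    envelAction (EnvelGroup.map f c) (f x) = f y := by
  rw [← map_envelAction]
  congr 1
  apply h₁
  apply hf
  rw [toEnvelGroup_envelAction, map_mul, map_mul, map_inv, EnvelGroup.map_toEnvelGroup,
    EnvelGroup.map_toEnvelGroup, h]

end Rack

namespace QW

variable {X Z : Type*} {T T' : Type*}

def eval [Rack T] (f : X → T) : QW X → T
  | of x => f x
  | op a b => eval f b ◃⁻¹ eval f a
  | opInv a b => eval f b ◃ eval f a

theorem eval_map [Rack T] (f : Z → T) (g : X → Z) (w : QW X) :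
    eval f (map g w) = eval (f ∘ g) w := by
  induction w with
  | of x => rfl
  | op a b iha ihb => simp only [map, eval, iha, ihb]
  | opInv a b iha ihb => simp only [map, eval, iha, ihb]

theorem eval_comp [Rack T] [Rack T'] (φ : T →◃ T') (f : X → T) (w : QW X) :
    eval (φ ∘ f) w = φ (eval f w) := by
  induction w with
  | of x => rfl
  | op a b iha ihb => simp only [eval, iha, ihb, φ.map_invAct]
  | opInv a b iha ihb => simp only [eval, iha, ihb, φ.map_act]

theorem eval_eq_of_rel [Quandle T] {R : QW X → QW X → Prop} (f : X → T)
    (hR : ∀ a b, R a b → eval f a = eval f b) {a b : QW X} (h : Rel R a b) :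
    eval f a = eval f b := by
  induction h with
  | rel h => exact hR _ _ h
  | refl a => rfl
  | symm _ ih => exact ih.symm
  | trans _ _ ih₁ ih₂ => exact ih₁.trans ih₂
  | congr_op _ _ ih₁ ih₂ => simp only [eval, ih₁, ih₂]
  | congr_opInv _ _ ih₁ ih₂ => simp only [eval, ih₁, ih₂]
  | idem a => exact Quandle.fix_inv
  | idemInv a => exact Quandle.fix
  | cancel a b => exact Rack.act_invAct_eq _ _
  | cancel' a b => exact Rack.invAct_act_eq _ _
  | distrib a b c => exact Rack.self_distrib_inv

end QW

namespace PresentedQuandle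

open Rack

variable {X : Type*} {R : QW X → QW X → Prop} {T : Type*}

def mk (R : QW X → QW X → Prop) (w : QW X) : PresentedQuandle R := Quotient.mk (QW.setoid R) w

def of (R : QW X → QW X → Prop) (x : X) : PresentedQuandle R := mk R (QW.of x)

theorem mk_surjective : Function.Surjective (mk R) := Quotient.mk_surjective

theorem mk_op (a b : QW X) : mk R (QW.op a b) = mk R b ◃⁻¹ mk R a := rfl

theorem mk_opInv (a b : QW X) : mk R (QW.opInv a b) = mk R b ◃ mk R a := rfl

theorem mk_eq_mk {a b : QW X} (h : R a b) : mk R a = mk R b := Quotient.sound (QW.Rel.rel h)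

theorem eval_of (w : QW X) : QW.eval (of R) w = mk R w := by
  induction w with
  | of x => rfl
  | op a b iha ihb => rw [QW.eval, iha, ihb, mk_op]
  | opInv a b iha ihb => rw [QW.eval, iha, ihb, mk_opInv]

def lift [Quandle T] (f : X → T) (hf : ∀ a b, R a b → QW.eval f a = QW.eval f b) :
    PresentedQuandle R →◃ T where
  toFun := Quotient.lift (QW.eval f) fun _ _ => QW.eval_eq_of_rel f hf
  map_act' := by
    rintro ⟨a⟩ ⟨b⟩
    rfl

theorem hom_ext [Rack T] {φ ψ : PresentedQuandle R →◃ T}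
    (h : ∀ x, φ (of R x) = ψ (of R x)) : φ = ψ := by
  refine DFunLike.ext _ _ fun z => ?_
  obtain ⟨w, rfl⟩ := mk_surjective z
  rw [← eval_of, ← QW.eval_comp, ← QW.eval_comp]
  exact congrArg (QW.eval · w) (funext h)

theorem exists_envelAction_of_eq (z : PresentedQuandle R) :
    ∃ (g : EnvelGroup (PresentedQuandle R)) (x : X), envelAction g (of R x) = z := by
  obtain ⟨w, rfl⟩ := mk_surjective z
  induction w with
  | of x => exact ⟨1, x, by rw [map_one]; rfl⟩
  | op a b iha _ =>
    obtain ⟨g, x, hg⟩ := iha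
    exact ⟨(toEnvelGroup _ (mk R b))⁻¹ * g, x, by
      rw [envelAction_mul, hg, envelAction_toEnvelGroup_inv, mk_op]⟩
  | opInv a b iha _ =>
    obtain ⟨g, x, hg⟩ := iha
    exact ⟨toEnvelGroup _ (mk R b) * g, x, by
      rw [envelAction_mul, hg, envelAction_prop, mk_opInv]⟩

section FreeProduct

open scoped Monoid.Coprod

variable {X Y : Type u} {R : QW X → QW X → Prop} {S : QW Y → QW Y → Prop}

theorem eval_of_comp_inl (w : QW X) :
    QW.eval (of (sumRel R S) ∘ Sum.inl) w = mk (sumRel R S) (QW.map Sum.inl w) := by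
  rw [← QW.eval_map, eval_of]

theorem eval_of_comp_inr (w : QW Y) :
    QW.eval (of (sumRel R S) ∘ Sum.inr) w = mk (sumRel R S) (QW.map Sum.inr w) := by
  rw [← QW.eval_map, eval_of]

def inl : PresentedQuandle R →◃ PresentedQuandle (sumRel R S) :=
  lift (of _ ∘ Sum.inl) fun a b h => by
    rw [eval_of_comp_inl, eval_of_comp_inl]
    exact mk_eq_mk (Or.inl ⟨a, b, h, rfl, rfl⟩)

def inr : PresentedQuandle S →◃ PresentedQuandle (sumRel R S) :=
  lift (of _ ∘ Sum.inr) fun a b h => by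
    rw [eval_of_comp_inr, eval_of_comp_inr]
    exact mk_eq_mk (Or.inr ⟨a, b, h, rfl, rfl⟩)

def sumLift [Quandle T] (f : PresentedQuandle R →◃ T) (g : PresentedQuandle S →◃ T) :
    PresentedQuandle (sumRel R S) →◃ T :=
  lift (Sum.elim (f ∘ of R) (g ∘ of S)) <| by
    rintro _ _ (⟨a, b, h, rfl, rfl⟩ | ⟨a, b, h, rfl, rfl⟩) <;>
      simp only [QW.eval_map, Sum.elim_comp_inl, Sum.elim_comp_inr, QW.eval_comp, eval_of,
        mk_eq_mk h]

theorem sumLift_comp_inl [Quandle T] (f : PresentedQuandle R →◃ T)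
    (g : PresentedQuandle S →◃ T) : (sumLift f g).comp inl = f :=
  hom_ext fun _ => rfl

theorem sumLift_comp_inr [Quandle T] (f : PresentedQuandle R →◃ T)
    (g : PresentedQuandle S →◃ T) : (sumLift f g).comp inr = g :=
  hom_ext fun _ => rfl

variable (R S)

def envelGroupSumToCoprod : EnvelGroup (PresentedQuandle (sumRel R S)) →*
    EnvelGroup (PresentedQuandle R) ∗ EnvelGroup (PresentedQuandle S) :=
  toEnvelGroup.map (sumLift ((Quandle.Conj.map Monoid.Coprod.inl).comp (toEnvelGroup _))
    ((Quandle.Conj.map Monoid.Coprod.inr).comp (toEnvelGroup _)))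

def coprodToEnvelGroupSum : EnvelGroup (PresentedQuandle R) ∗ EnvelGroup (PresentedQuandle S) →*
    EnvelGroup (PresentedQuandle (sumRel R S)) :=
  Monoid.Coprod.lift (EnvelGroup.map inl) (EnvelGroup.map inr)

variable {R S}

theorem envelGroupSumToCoprod_inl (q : PresentedQuandle R) :
    envelGroupSumToCoprod R S (toEnvelGroup _ (inl q)) = Monoid.Coprod.inl (toEnvelGroup _ q) :=
  DFunLike.congr_fun (sumLift_comp_inl _ _) q

theorem envelGroupSumToCoprod_inr (p : PresentedQuandle S) :
    envelGroupSumToCoprod R S (toEnvelGroup _ (inr p)) = Monoid.Coprod.inr (toEnvelGroup _ p) :=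
  DFunLike.congr_fun (sumLift_comp_inr _ _) p

variable (R S) in
def envelGroupSumEquiv : EnvelGroup (PresentedQuandle (sumRel R S)) ≃*
    EnvelGroup (PresentedQuandle R) ∗ EnvelGroup (PresentedQuandle S) :=
  MonoidHom.toMulEquiv (envelGroupSumToCoprod R S) (coprodToEnvelGroupSum R S)
    (EnvelGroup.hom_ext fun z => DFunLike.congr_fun
      (hom_ext (φ := (Quandle.Conj.map _).comp (sumLift _ _)) (ψ := toEnvelGroup _)
        (by rintro (x | y) <;> rfl)) z)
    (Monoid.Coprod.hom_ext
      (EnvelGroup.hom_ext fun q => by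
        simp [coprodToEnvelGroupSum, EnvelGroup.map_toEnvelGroup, envelGroupSumToCoprod_inl])
      (EnvelGroup.hom_ext fun p => by
        simp [coprodToEnvelGroupSum, EnvelGroup.map_toEnvelGroup, envelGroupSumToCoprod_inr]))

theorem envelGroupSumEquiv_symm_inl (c : EnvelGroup (PresentedQuandle R)) :
    (envelGroupSumEquiv R S).symm (Monoid.Coprod.inl c) = EnvelGroup.map inl c :=
  Monoid.Coprod.lift_apply_inl (EnvelGroup.map inl) (EnvelGroup.map inr) c

theorem envelGroupSumEquiv_symm_inr (c : EnvelGroup (PresentedQuandle S)) :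
    (envelGroupSumEquiv R S).symm (Monoid.Coprod.inr c) = EnvelGroup.map inr c :=
  Monoid.Coprod.lift_apply_inr (EnvelGroup.map inl) (EnvelGroup.map inr) c

theorem envelGroupMap_inl_injective :
    Function.Injective
      (EnvelGroup.map (inl : PresentedQuandle R →◃ PresentedQuandle (sumRel R S))) :=
  (envelGroupSumEquiv R S).symm.injective.comp Monoid.Coprod.inl_injective

theorem envelGroupMap_inr_injective :
    Function.Injective
      (EnvelGroup.map (inr : PresentedQuandle S →◃ PresentedQuandle (sumRel R S))) :=
  (envelGroupSumEquiv R S).symm.injective.comp Monoid.Coprod.inr_injective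

theorem envelAction_of_eq_of_conj_eq (hQ : Function.Injective (toEnvelGroup (PresentedQuandle R)))
    (hP : Function.Injective (toEnvelGroup (PresentedQuandle S)))
    {k : EnvelGroup (PresentedQuandle (sumRel R S))} {x y : X ⊕ Y}
    (h : k * toEnvelGroup _ (of _ x) * k⁻¹ = toEnvelGroup _ (of _ y)) :
    envelAction k (of _ x) = of _ y := by
  set e := envelGroupSumEquiv R S
  have he := congrArg e h
  rw [map_mul, map_mul, map_inv] at he
  rw [← e.symm_apply_apply k] at h ⊢
  rcases x with x | x <;> rcases y with y | y
  · obtain ⟨c, hc⟩ := Monoid.Coprod.mem_range_inl_of_conj_eq_inl (toEnvelGroup_ne_one _) he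
    rw [← hc, envelGroupSumEquiv_symm_inl] at h ⊢
    exact envelAction_map_eq_of_conj_eq inl envelGroupMap_inl_injective hQ (x := of R x)
      (y := of R y) h
  · exact absurd he (Monoid.Coprod.conj_inl_ne_inr (toEnvelGroup_ne_one _) _ _)
  · exact absurd he (Monoid.Coprod.conj_inr_ne_inl (toEnvelGroup_ne_one _) _ _)
  · obtain ⟨c, hc⟩ := Monoid.Coprod.mem_range_inr_of_conj_eq_inr (toEnvelGroup_ne_one _) he
    rw [← hc, envelGroupSumEquiv_symm_inr] at h ⊢
    exact envelAction_map_eq_of_conj_eq inr envelGroupMap_inr_injective hP (x := of S x)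
      (y := of S y) h

theorem toEnvelGroup_sumRel_injective (hQ : Function.Injective (toEnvelGroup (PresentedQuandle R)))
    (hP : Function.Injective (toEnvelGroup (PresentedQuandle S))) :
    Function.Injective (toEnvelGroup (PresentedQuandle (sumRel R S))) := by
  intro z z' h
  obtain ⟨g, x, rfl⟩ := exists_envelAction_of_eq z
  obtain ⟨g', y, rfl⟩ := exists_envelAction_of_eq z'
  rw [toEnvelGroup_envelAction, toEnvelGroup_envelAction] at h
  have hk : (g'⁻¹ * g) * toEnvelGroup _ (of _ x) * (g'⁻¹ * g)⁻¹ =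
      toEnvelGroup _ (of _ y) :=
    calc (g'⁻¹ * g) * toEnvelGroup _ (of _ x) * (g'⁻¹ * g)⁻¹
        = g'⁻¹ * (g * toEnvelGroup _ (of _ x) * g⁻¹) * g' := by group
      _ = toEnvelGroup _ (of _ y) := by rw [h]; group
  rw [← envelAction_of_eq_of_conj_eq hQ hP hk, ← envelAction_mul, mul_inv_cancel_left]

end FreeProduct

end PresentedQuandle

/-- If `Q = ⟨X | R⟩` and `P = ⟨Y | S⟩` are presented quandles, then the enveloping group of
their free product `Q * P = ⟨X ∪ Y | R ∪ S⟩` is the free product (coproduct) of groups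
`G_Q * G_P`; moreover, if the natural maps `Q → G_Q` and `P → G_P` are injective, then so is
the natural map `Q * P → G_{Q*P}`. -/
theorem envelGroup_free_product (X Y : Type u)
    (R : QW X → QW X → Prop) (S : QW Y → QW Y → Prop) :
    Nonempty (Rack.EnvelGroup (PresentedQuandle (sumRel R S)) ≃*
      Monoid.Coprod (Rack.EnvelGroup (PresentedQuandle R))
        (Rack.EnvelGroup (PresentedQuandle S))) ∧
    (Function.Injective (fun q : PresentedQuandle R =>
        (Rack.toEnvelGroup _ q : Rack.EnvelGroup (PresentedQuandle R))) →
     Function.Injective (fun p : PresentedQuandle S =>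
        (Rack.toEnvelGroup _ p : Rack.EnvelGroup (PresentedQuandle S))) →
     Function.Injective (fun z : PresentedQuandle (sumRel R S) =>
        (Rack.toEnvelGroup _ z : Rack.EnvelGroup (PresentedQuandle (sumRel R S))))) :=
  ⟨⟨PresentedQuandle.envelGroupSumEquiv R S⟩,
    PresentedQuandle.toEnvelGroup_sumRel_injective⟩
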